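/- Let R be a commutative ring, W_{D^n} = R[X_1,...,X_n]/(X_1^2,...,X_n^2), and W_{D_n} = R[T]/(T^{n+1}). The R-algebra map σ : W_{D_n} → W_{D^n} induced by T ↦ X_1 + ... + X_n is the equalizer of the n−1 transposition automorphisms τ_i of W_{D^n} (swapping X_i and X_{i+1}) against the identity: an element of W_{D^n} is fixed by all τ_i if and only if it lies in the image of σ, and σ is injective provided n! is invertible in R. -/

import Mathlib

set_option synthInstance.maxHeartbeats 1000000
set_option maxHeartbeats 1000000

open Finset

/-- The Weil algebra `W_{D_n} = R[T]/(T^{n+1})`. -/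
abbrev WeilDn (R : Type*) [CommRing R] (n : ℕ) : Type _ :=
  Polynomial R ⧸ Ideal.span {(Polynomial.X : Polynomial R) ^ (n + 1)}

/-- The ideal `(X₁²,...,Xₙ²)` of `R[X₁,...,Xₙ]`. -/
noncomputable abbrev sqIdeal (R : Type*) [CommRing R] (n : ℕ) : Ideal (MvPolynomial (Fin n) R) :=
  Ideal.span (Set.range fun i : Fin n => (MvPolynomial.X i : MvPolynomial (Fin n) R) ^ 2)

/-- The Weil algebra `W_{D^n} = R[X₁,...,Xₙ]/(X₁²,...,Xₙ²)`. -/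
abbrev WeilDpow (R : Type*) [CommRing R] (n : ℕ) : Type _ :=
  MvPolynomial (Fin n) R ⧸ sqIdeal R n

/-! Modulo `(X₁², …, Xₙ²)` a polynomial is determined by its coefficients at the squarefree
monomials `X_S = ∏_{i ∈ S} Xᵢ`, and the coefficient of `X_S` in `(X₁ + ⋯ + Xₙ)ᵏ` is `k!` if
`|S| = k` and `0` otherwise. The adjacent transpositions generate `Sₙ`, which acts transitively
on the subsets of a given size, so a class fixed by all `τᵢ` has coefficients `c_{|S|}`
depending only on `|S|`; it is the image of `∑ₖ (c_k / k!) Tᵏ`. Likewise `σ f = 0` forces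
`k! f_k = 0`, hence `f_k = 0`, for all `k ≤ n`. -/

open Finset MvPolynomial
open scoped Nat

theorem isUnit_natCast_factorial_of_le {R : Type*} [CommSemiring R] {k n : ℕ}
    (hn : IsUnit (n ! : R)) (hk : k ≤ n) : IsUnit (k ! : R) :=
  isUnit_of_dvd_unit (Nat.cast_dvd_cast (Nat.factorial_dvd_factorial hk)) hn

theorem Ideal.Quotient.algHom_mk_eq_mk_aeval {R B : Type*} [CommRing R] [CommRing B]
    [Algebra R B] {I : Ideal (Polynomial R)} {J : Ideal B} (g : Polynomial R ⧸ I →ₐ[R] B ⧸ J)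
    {b : B} (hg : g (mk I Polynomial.X) = mk J b) (f : Polynomial R) :
    g (mk I f) = mk J (Polynomial.aeval b f) := by
  have hX := (Polynomial.aeval_algHom_apply (g.comp (mkₐ R I)) Polynomial.X f).symm
  have hb := Polynomial.aeval_algHom_apply (mkₐ R J) b f
  simp_all [mkₐ_eq_mk]

namespace Finsupp

variable {σ : Type*} {d d' : σ →₀ ℕ}

theorem apply_eq_apply_of_le_one (hd : ∀ i, d i ≤ 1) (hd' : ∀ i, d' i ≤ 1) {i j : σ}
    (h : i ∈ d.support ↔ j ∈ d'.support) : d i = d' j := by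
  have := hd i
  have := hd' j
  simp only [mem_support_iff] at h
  omega

theorem degree_eq_card_support_of_le_one (hd : ∀ i, d i ≤ 1) : d.degree = #d.support := by
  rw [degree_apply, card_eq_sum_ones]
  exact Finset.sum_congr rfl fun i hi =>
    le_antisymm (hd i) (Nat.one_le_iff_ne_zero.2 (mem_support_iff.1 hi))

theorem multinomial_eq_factorial_degree_of_le_one (hd : ∀ i, d i ≤ 1) :
    d.multinomial = d.degree ! := by
  rw [multinomial, Finsupp.prod, prod_eq_one fun i _ => Nat.factorial_eq_one.2 (hd i),
    Nat.div_one]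
  rfl

theorem exists_le_one_degree_eq_of_le_card [Fintype σ] {k : ℕ} (hk : k ≤ Fintype.card σ) :
    ∃ d : σ →₀ ℕ, (∀ i, d i ≤ 1) ∧ d.degree = k := by
  classical
  obtain ⟨s, -, rfl⟩ := exists_subset_card_eq (s := univ) (by simpa using hk)
  refine ⟨∑ i ∈ s, single i 1, fun j => ?_, by simp⟩
  simp only [finsetSum_apply, single_apply]
  rw [Finset.sum_ite_eq']
  split_ifs <;> simp

theorem exists_perm_mapDomain_eq_of_le_one (hd : ∀ i, d i ≤ 1) (hd' : ∀ i, d' i ≤ 1)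
    (hdeg : d.degree = d'.degree) : ∃ e : Equiv.Perm σ, mapDomain e d = d' := by
  classical
  obtain ⟨e, he⟩ := Equiv.Perm.exists_map_finset_eq d.support d'.support
    (by rwa [← degree_eq_card_support_of_le_one hd, ← degree_eq_card_support_of_le_one hd'])
  refine ⟨e, ext fun j => ?_⟩
  rw [mapDomain_equiv_apply]
  exact apply_eq_apply_of_le_one hd hd' (by rw [← he, mem_map_equiv])

end Finsupp

namespace MvPolynomial

variable {R σ : Type*} [CommSemiring R] [Fintype σ] {d : σ →₀ ℕ}

theorem coeff_sum_X_pow_of_le_one (hd : ∀ i, d i ≤ 1) (k : ℕ) :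
    coeff d ((∑ i, X i : MvPolynomial σ R) ^ k) = if d.degree = k then (k ! : R) else 0 := by
  rw [coeff_sum_X_pow_of_fintype, Finsupp.multinomial_eq_factorial_degree_of_le_one hd]
  split_ifs with h <;> simp_all [Finsupp.degree_apply, Finsupp.sum]

theorem coeff_aeval_sum_X_of_le_one (hd : ∀ i, d i ≤ 1) (f : Polynomial R) :
    coeff d (Polynomial.aeval (∑ i, X i : MvPolynomial σ R) f) =
      f.coeff d.degree * d.degree ! := by
  induction f using Polynomial.induction_on' with
  | add p q hp hq => simp [hp, hq, add_mul]
  | monomial k a =>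
    rw [Polynomial.aeval_monomial, algebraMap_eq, coeff_C_mul, coeff_sum_X_pow_of_le_one hd,
      Polynomial.coeff_monomial]
    split_ifs <;> simp_all

theorem rename_sum_X (e : Equiv.Perm σ) : rename e (∑ i, X i : MvPolynomial σ R) = ∑ i, X i := by
  simp only [map_sum, rename_X]
  exact Equiv.sum_comp e _

end MvPolynomial

namespace WeilDpow

variable {R : Type*} [CommRing R] {n : ℕ}

theorem mem_sqIdeal_iff {p : MvPolynomial (Fin n) R} :
    p ∈ sqIdeal R n ↔ ∀ d : Fin n →₀ ℕ, (∀ i, d i ≤ 1) → coeff d p = 0 := by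
  have : sqIdeal R n =
      Ideal.span ((fun s => monomial s (1 : R)) '' Set.range fun i => Finsupp.single i 2) := by
    simp only [sqIdeal, ← Set.range_comp, Function.comp_def, X_pow_eq_monomial]
  rw [this, mem_ideal_span_monomial_image]
  simp only [Set.mem_range, exists_exists_eq_and, Finsupp.single_le_iff, mem_support_iff]
  refine forall_congr' fun d => ?_
  rw [not_imp_comm]
  simp only [not_exists, not_le, Nat.lt_succ_iff]

theorem mk_eq_mk_iff {p q : MvPolynomial (Fin n) R} :
    Ideal.Quotient.mk (sqIdeal R n) p = Ideal.Quotient.mk _ q ↔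
      ∀ d : Fin n →₀ ℕ, (∀ i, d i ≤ 1) → coeff d p = coeff d q := by
  simp only [Ideal.Quotient.eq, mem_sqIdeal_iff, coeff_sub, sub_eq_zero]

theorem sqIdeal_le_comap_rename (e : Equiv.Perm (Fin n)) :
    sqIdeal R n ≤ (sqIdeal R n).comap (rename e) :=
  Ideal.span_le.2 <| Set.range_subset_iff.2 fun i => by
    rw [SetLike.mem_coe, Ideal.mem_comap, map_pow, rename_X]
    exact Ideal.subset_span ⟨e i, rfl⟩

noncomputable def permAlgHom (e : Equiv.Perm (Fin n)) : WeilDpow R n →ₐ[R] WeilDpow R n :=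
  Ideal.quotientMapₐ _ (rename e) (sqIdeal_le_comap_rename e)

@[simp]
theorem permAlgHom_mk (e : Equiv.Perm (Fin n)) (p : MvPolynomial (Fin n) R) :
    permAlgHom e (Ideal.Quotient.mk _ p) = Ideal.Quotient.mk (sqIdeal R n) (rename e p) :=
  rfl

theorem permAlgHom_mul_apply (e f : Equiv.Perm (Fin n)) (a : WeilDpow R n) :
    permAlgHom (e * f) a = permAlgHom e (permAlgHom f a) := by
  obtain ⟨p, rfl⟩ := Ideal.Quotient.mk_surjective a
  simp [rename_rename, Function.comp_def]

theorem eq_permAlgHom_of_apply_mk_X (e : Equiv.Perm (Fin n))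
    {g : WeilDpow R n →ₐ[R] WeilDpow R n}
    (h : ∀ k, g (Ideal.Quotient.mk _ (X k)) = Ideal.Quotient.mk _ (X (e k))) :
    g = permAlgHom e :=
  Ideal.Quotient.algHom_ext R <| MvPolynomial.algHom_ext fun k => by simpa using h k

theorem permAlgHom_apply_eq_of_forall_swap {m : ℕ} {a : WeilDpow R (m + 1)}
    (h : ∀ i : Fin m, permAlgHom (Equiv.swap i.castSucc i.succ) a = a)
    (e : Equiv.Perm (Fin (m + 1))) : permAlgHom e a = a := by
  have he : e ∈ Submonoid.closure (Set.range fun i : Fin m => Equiv.swap i.castSucc i.succ) := by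
    rw [Equiv.Perm.mclosure_swap_castSucc_succ]
    exact Submonoid.mem_top e
  induction he using Submonoid.closure_induction with
  | mem x hx =>
    obtain ⟨i, rfl⟩ := hx
    exact h i
  | one =>
    obtain ⟨p, rfl⟩ := Ideal.Quotient.mk_surjective a
    simp
  | mul x y _ _ hx hy => rw [permAlgHom_mul_apply, hy, hx]

theorem coeff_eq_coeff_of_forall_permAlgHom {p : MvPolynomial (Fin n) R}
    (h : ∀ e, permAlgHom e (Ideal.Quotient.mk _ p) = Ideal.Quotient.mk _ p)
    {d d' : Fin n →₀ ℕ} (hd : ∀ i, d i ≤ 1) (hd' : ∀ i, d' i ≤ 1)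
    (hdeg : d.degree = d'.degree) : coeff d p = coeff d' p := by
  obtain ⟨e, rfl⟩ := Finsupp.exists_perm_mapDomain_eq_of_le_one hd hd' hdeg
  rw [← coeff_rename_mapDomain _ e.injective p]
  exact mk_eq_mk_iff.1 ((permAlgHom_mk e p).symm.trans (h e)) _ hd'

theorem exists_coeff_eq_of_forall_permAlgHom {p : MvPolynomial (Fin n) R}
    (h : ∀ e, permAlgHom e (Ideal.Quotient.mk _ p) = Ideal.Quotient.mk _ p) :
    ∃ c : ℕ → R, ∀ d : Fin n →₀ ℕ, (∀ i, d i ≤ 1) → coeff d p = c d.degree := by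
  classical
  refine ⟨fun k => if hk : ∃ d : Fin n →₀ ℕ, (∀ i, d i ≤ 1) ∧ d.degree = k then
    coeff hk.choose p else 0, fun d hd => ?_⟩
  have hk : ∃ d' : Fin n →₀ ℕ, (∀ i, d' i ≤ 1) ∧ d'.degree = d.degree := ⟨d, hd, rfl⟩
  simp only [dif_pos hk]
  exact coeff_eq_coeff_of_forall_permAlgHom h hd hk.choose_spec.1 hk.choose_spec.2.symm

theorem exists_mk_aeval_eq_of_forall_permAlgHom (hfac : IsUnit (n ! : R)) {a : WeilDpow R n}
    (h : ∀ e, permAlgHom e a = a) : ∃ f : Polynomial R,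
      Ideal.Quotient.mk _ (Polynomial.aeval (∑ i, X i : MvPolynomial (Fin n) R) f) = a := by
  obtain ⟨p, rfl⟩ := Ideal.Quotient.mk_surjective a
  obtain ⟨c, hc⟩ := exists_coeff_eq_of_forall_permAlgHom h
  refine ⟨∑ k ∈ range (n + 1), Polynomial.monomial k (Ring.inverse (k ! : R) * c k),
    mk_eq_mk_iff.2 fun d hd => ?_⟩
  have hdeg : d.degree ≤ n := by
    simpa [Finsupp.degree_eq_card_support_of_le_one hd] using card_le_univ d.support
  simp only [coeff_aeval_sum_X_of_le_one hd, Polynomial.finsetSum_coeff,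
    Polynomial.coeff_monomial, sum_ite_eq', mem_range, if_pos (Nat.lt_succ_of_le hdeg)]
  rw [hc d hd, mul_right_comm,
    Ring.inverse_mul_cancel _ (isUnit_natCast_factorial_of_le hfac hdeg), one_mul]

theorem permAlgHom_mk_aeval_sum_X (e : Equiv.Perm (Fin n)) (f : Polynomial R) :
    permAlgHom e (Ideal.Quotient.mk _ (Polynomial.aeval (∑ i, X i : MvPolynomial (Fin n) R) f)) =
      Ideal.Quotient.mk _ (Polynomial.aeval (∑ i, X i : MvPolynomial (Fin n) R) f) := by
  rw [permAlgHom_mk, ← Polynomial.aeval_algHom_apply, rename_sum_X]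

theorem X_pow_dvd_of_mk_aeval_eq_zero (hfac : IsUnit (n ! : R)) {f : Polynomial R}
    (hf : Ideal.Quotient.mk (sqIdeal R n)
      (Polynomial.aeval (∑ i, X i : MvPolynomial (Fin n) R) f) = 0) :
    Polynomial.X ^ (n + 1) ∣ f := by
  rw [Polynomial.X_pow_dvd_iff]
  intro k hk
  obtain ⟨d, hd, rfl⟩ := Finsupp.exists_le_one_degree_eq_of_le_card (σ := Fin n) (k := k)
    (by simpa using Nat.lt_succ_iff.1 hk)
  have := mk_eq_mk_iff.1 (hf.trans (map_zero _).symm) d hd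
  rw [coeff_aeval_sum_X_of_le_one hd, coeff_zero] at this
  exact (isUnit_natCast_factorial_of_le hfac (Nat.lt_succ_iff.1 hk)).mul_left_eq_zero.1 this

end WeilDpow

open WeilDpow in
theorem weilDn_symmetric_equalizer {R : Type*} [CommRing R] (m : ℕ)
    (hfac : IsUnit ((Nat.factorial (m + 1) : R)))
    (σ : WeilDn R (m + 1) →ₐ[R] WeilDpow R (m + 1))
    (hσ : σ (Ideal.Quotient.mk _ (Polynomial.X : Polynomial R)) =
      Ideal.Quotient.mk (sqIdeal R (m + 1)) (∑ i, MvPolynomial.X i))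
    (τ : Fin m → (WeilDpow R (m + 1) →ₐ[R] WeilDpow R (m + 1)))
    (hτ : ∀ (i : Fin m) (k : Fin (m + 1)),
      τ i (Ideal.Quotient.mk (sqIdeal R (m + 1)) (MvPolynomial.X k)) =
        Ideal.Quotient.mk (sqIdeal R (m + 1))
          (MvPolynomial.X (Equiv.swap i.castSucc i.succ k))) :
    (∀ a : WeilDpow R (m + 1), (∀ i : Fin m, τ i a = a) ↔ a ∈ σ.range) ∧
      Function.Injective σ := by
  have hσ_mk := Ideal.Quotient.algHom_mk_eq_mk_aeval σ hσ
  have hτ_eq i : τ i = permAlgHom (Equiv.swap i.castSucc i.succ) :=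
    eq_permAlgHom_of_apply_mk_X _ (hτ i)
  refine ⟨fun a => ⟨fun hfix => ?_, ?_⟩, ?_⟩
  · obtain ⟨f, hf⟩ := exists_mk_aeval_eq_of_forall_permAlgHom hfac
      (permAlgHom_apply_eq_of_forall_swap fun i => hτ_eq i ▸ hfix i)
    exact ⟨Ideal.Quotient.mk _ f, (hσ_mk f).trans hf⟩
  · rintro ⟨x, rfl⟩ i
    obtain ⟨f, rfl⟩ := Ideal.Quotient.mk_surjective x
    rw [AlgHom.toRingHom_eq_coe, RingHom.coe_coe, hσ_mk, hτ_eq, permAlgHom_mk_aeval_sum_X]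
  · refine (injective_iff_map_eq_zero σ).2 fun x hx => ?_
    obtain ⟨f, rfl⟩ := Ideal.Quotient.mk_surjective x
    rw [hσ_mk] at hx
    exact Ideal.Quotient.eq_zero_iff_mem.2 <|
      Ideal.mem_span_singleton.2 (X_pow_dvd_of_mk_aeval_eq_zero hfac hx)
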